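/- Let H be a real inner product space and v_1, …, v_q ∈ H satisfy |⟪v_i, v_j⟫ - δ_{ij}| ≤ ε for all i, j, where 0 ≤ ε < 1/q. If u = ∑_j β_j v_j has ‖u‖ = 1, then 1/(1 + qε) ≤ ∑_j β_j² ≤ 1/(1 - qε). -/

import Mathlib

/-!
Expanding `‖u‖² = ∑ᵢⱼ βᵢ βⱼ ⟪vᵢ, vⱼ⟫` and subtracting the diagonal part `∑ᵢ βᵢ²` leaves a quadratic
form whose coefficients are at most `ε` in absolute value; by Cauchy–Schwarz it is bounded by
`ε (∑ᵢ |βᵢ|)² ≤ q ε ∑ᵢ βᵢ²`. Hence `|1 - S| ≤ q ε S` for `S = ∑ᵢ βᵢ²`, which rearranges to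
`1 / (1 + q ε) ≤ S ≤ 1 / (1 - q ε)` as soon as `q ε < 1`.
-/

open RealInnerProductSpace Finset

section GramForm

variable {ι H : Type*} [Fintype ι] [NormedAddCommGroup H] [InnerProductSpace ℝ H]

theorem norm_sum_smul_sq_eq_sum_sum_inner (β : ι → ℝ) (v : ι → H) :
    ‖∑ i, β i • v i‖ ^ 2 = ∑ i, ∑ j, β i * β j * ⟪v i, v j⟫ := by
  rw [← real_inner_self_eq_norm_sq, sum_inner]
  refine sum_congr rfl fun i _ => ?_
  rw [inner_sum]
  refine sum_congr rfl fun j _ => ?_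
  rw [real_inner_smul_left, real_inner_smul_right]
  ring

theorem abs_sum_sum_mul_le_card_mul_sum_sq (β : ι → ℝ) (E : ι → ι → ℝ) {ε : ℝ} (hε : 0 ≤ ε)
    (hE : ∀ i j, |E i j| ≤ ε) :
    |∑ i, ∑ j, β i * β j * E i j| ≤ Fintype.card ι * ε * ∑ i, β i ^ 2 :=
  calc |∑ i, ∑ j, β i * β j * E i j|
      ≤ ∑ i, ∑ j, |β i * β j * E i j| :=
        (abs_sum_le_sum_abs _ _).trans (sum_le_sum fun i _ => abs_sum_le_sum_abs _ _)
    _ ≤ ∑ i, ∑ j, |β i| * |β j| * ε :=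
        sum_le_sum fun i _ => sum_le_sum fun j _ => by
          rw [abs_mul, abs_mul]
          exact mul_le_mul_of_nonneg_left (hE i j) (by positivity)
    _ = (∑ i, |β i|) ^ 2 * ε := by
        simp_rw [sq, sum_mul_sum, sum_mul]
    _ ≤ (Fintype.card ι * ∑ i, β i ^ 2) * ε := by
        gcongr
        simpa only [sq_abs, card_univ] using sq_sum_le_card_mul_sum_sq (s := univ) (f := (|β ·|))
    _ = Fintype.card ι * ε * ∑ i, β i ^ 2 := by ring

theorem abs_norm_sum_smul_sq_sub_sum_sq_le [DecidableEq ι] (β : ι → ℝ) (v : ι → H) {ε : ℝ}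
    (hε : 0 ≤ ε) (hv : ∀ i j, |⟪v i, v j⟫ - (if i = j then (1 : ℝ) else 0)| ≤ ε) :
    |‖∑ i, β i • v i‖ ^ 2 - ∑ i, β i ^ 2| ≤ Fintype.card ι * ε * ∑ i, β i ^ 2 := by
  have hdiag : ∑ i, β i ^ 2 = ∑ i, ∑ j, β i * β j * (if i = j then (1 : ℝ) else 0) := by
    simp [sq]
  convert abs_sum_sum_mul_le_card_mul_sum_sq β _ hε hv using 2
  simp only [norm_sum_smul_sq_eq_sum_sum_inner, hdiag, ← sum_sub_distrib, mul_sub]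

end GramForm

theorem one_div_one_add_le_and_le_one_div_one_sub {c S : ℝ} (hc0 : 0 ≤ c) (hc1 : c < 1)
    (h : |1 - S| ≤ c * S) : 1 / (1 + c) ≤ S ∧ S ≤ 1 / (1 - c) := by
  rw [abs_le] at h
  constructor
  · rw [div_le_iff₀ (by linarith)]
    linarith
  · rw [le_div_iff₀ (by linarith)]
    linarith

theorem stmt_6_general {H : Type*} [NormedAddCommGroup H] [InnerProductSpace ℝ H]
    (q : ℕ) (v : Fin q → H)
    (ε : ℝ) (hε0 : 0 ≤ ε) (hε1 : ε < 1 / q)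
    (horth : ∀ i j, |⟪v i, v j⟫ - (if i = j then (1:ℝ) else 0)| ≤ ε)
    (β : Fin q → ℝ)
    (hu : ‖∑ j, β j • v j‖ = 1) :
    1 / (1 + q * ε) ≤ ∑ j, (β j) ^ 2 ∧ ∑ j, (β j) ^ 2 ≤ 1 / (1 - q * ε) := by
  have hq : (0 : ℝ) < q := one_div_pos.mp (hε0.trans_lt hε1)
  have hqε : (q : ℝ) * ε < 1 := by rwa [lt_div_iff₀' hq] at hε1
  have hgram := abs_norm_sum_smul_sq_sub_sum_sq_le β v hε0 horth
  rw [hu, one_pow, Fintype.card_fin] at hgram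
  exact one_div_one_add_le_and_le_one_div_one_sub (by positivity) hqε hgram

theorem stmt_6 {H : Type*} [NormedAddCommGroup H] [InnerProductSpace ℝ H]
    (q : ℕ) (hq : 0 < q) (v : Fin q → H)
    (ε : ℝ) (hε0 : 0 ≤ ε) (hε1 : ε < 1 / q)
    (horth : ∀ i j, |⟪v i, v j⟫ - (if i = j then (1:ℝ) else 0)| ≤ ε)
    (β : Fin q → ℝ)
    (hu : ‖∑ j, β j • v j‖ = 1) :
    1 / (1 + q * ε) ≤ ∑ j, (β j) ^ 2 ∧ ∑ j, (β j) ^ 2 ≤ 1 / (1 - q * ε) :=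
  stmt_6_general q v ε hε0 hε1 horth β hu
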